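/- In the k = 1 strongly-connected construction of Theorem 5.1, the unique cop, starting at ω, has a strategy forcing the robber along his track so that the robber is captured; hence the graph has cop number exactly 1. -/
import Mathlib


namespace PCR

/-- A (positional) strategy for `k` cops. -/
structure CopStrat (V : Type) (k : ℕ) where
  init : Fin k → V
  move : (Fin k → V) → V → Fin k → V

/-- A (positional) strategy for the robber. -/
structure RobStrat (V : Type) (k : ℕ) where
  init : (Fin k → V) → V
  move : (Fin k → V) → V → V

variable {V : Type} {k : ℕ}

/-- The configuration (cop positions, robber position) at the end of round `t`. -/
def play (cs : CopStrat V k) (rs : RobStrat V k) : ℕ → (Fin k → V) × V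
  | 0 => (cs.init, rs.init cs.init)
  | t + 1 =>
      let c := cs.move (play cs rs t).1 (play cs rs t).2
      (c, rs.move c (play cs rs t).2)

/-- Cops must move along edges of the (possibly directed, possibly irreflexive) graph. -/
def CopStrat.Valid (adj : V → V → Prop) (cs : CopStrat V k) : Prop :=
  ∀ c r i, adj (c i) (cs.move c r i)

/-- The robber must move along edges. -/
def RobStrat.Valid (adj : V → V → Prop) (rs : RobStrat V k) : Prop :=
  ∀ c r, adj r (rs.move c r)

/-- In Cops and Robbers with Protection, the robber is captured at round `s`
only if some cop reaches the robber's vertex by moving along an *unprotected* edge. -/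
def caughtAt (unprot : V → V → Prop) (cs : CopStrat V k) (rs : RobStrat V k) : ℕ → Prop
  | 0 => False
  | t + 1 => ∃ i,
      unprot ((play cs rs t).1 i) (cs.move (play cs rs t).1 (play cs rs t).2 i) ∧
      cs.move (play cs rs t).1 (play cs rs t).2 i = (play cs rs t).2

/-- `k` cops can guarantee capture within `t` rounds in the protected game. -/
def CopsWinIn (adj unprot : V → V → Prop) (k t : ℕ) : Prop :=
  ∃ cs : CopStrat V k, cs.Valid adj ∧
    ∀ rs : RobStrat V k, rs.Valid adj → ∃ s, s ≤ t ∧ caughtAt unprot cs rs s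

/-- The cop number of a protected graph. -/
noncomputable def copNumber (adj unprot : V → V → Prop) : ℕ :=
  sInf {k | ∃ t, CopsWinIn adj unprot k t}

/-- The capture time of a protected graph. -/
noncomputable def captTime (adj unprot : V → V → Prop) : ℕ :=
  sInf {t | CopsWinIn adj unprot (copNumber adj unprot) t}

end PCR

/-- Vertices of the `k = 1` strongly-connected construction of Theorem 5.1: a one-vertex
starter clique, a cop track `c` of length `q` with twin copy `c'`, a robber track `r` of
length `p` (with `r ⟨p-1⟩` the branch vertex) with twin copy `r'`, the escape vertex `s`,
and the vertices `ω` and `ψ`. -/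
inductive V19 (p q : ℕ) : Type
  | start : V19 p q
  | c : Fin q → V19 p q
  | c' : Fin q → V19 p q
  | r : Fin p → V19 p q
  | r' : Fin p → V19 p q
  | s : V19 p q
  | omega : V19 p q
  | psi : V19 p q

/-- The unprotected edges of the construction: the cop tracks and robber tracks are directed
cycles (twinned, so all four cross edges are present), `c 0` and `c' 0` enter the starter
clique, every cop-track vertex has edges to every robber-track vertex of its own kind
(plus the twinned terminal edges `c (q-1) → r' (p-1)` and `c' (q-1) → r (p-1)`), every
cop-track and robber-track vertex has an edge to the escape vertex `s`, `s → start`,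
`s → ω`, `start → r 0` and `start → r' 0`, every cop-track vertex has an edge to `ψ`,
`ψ → ω`, `ω → ψ`, and `ω` has edges to everything except the starter clique (including an
unprotected loop at `ω`). -/
def unprot19 (p q : ℕ) : V19 p q → V19 p q → Prop
  | .c i, .start => (i : ℕ) = 0
  | .c' i, .start => (i : ℕ) = 0
  | .c i, .c j => (j : ℕ) = ((i : ℕ) + 1) % q
  | .c i, .c' j => (j : ℕ) = ((i : ℕ) + 1) % q
  | .c' i, .c j => (j : ℕ) = ((i : ℕ) + 1) % q
  | .c' i, .c' j => (j : ℕ) = ((i : ℕ) + 1) % q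
  | .c _, .r _ => True
  | .c' _, .r' _ => True
  | .c i, .r' j => (i : ℕ) = q - 1 ∧ (j : ℕ) = p - 1
  | .c' i, .r j => (i : ℕ) = q - 1 ∧ (j : ℕ) = p - 1
  | .c _, .s => True
  | .c' _, .s => True
  | .c _, .psi => True
  | .c' _, .psi => True
  | .r i, .r j => (j : ℕ) = ((i : ℕ) + 1) % p
  | .r i, .r' j => (j : ℕ) = ((i : ℕ) + 1) % p
  | .r' i, .r j => (j : ℕ) = ((i : ℕ) + 1) % p
  | .r' i, .r' j => (j : ℕ) = ((i : ℕ) + 1) % p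
  | .r _, .s => True
  | .r' _, .s => True
  | .s, .start => True
  | .s, .omega => True
  | .start, .r j => (j : ℕ) = 0
  | .start, .r' j => (j : ℕ) = 0
  | .psi, .omega => True
  | .omega, .start => False
  | .omega, _ => True
  | _, _ => False

/-- The move relation: every vertex additionally carries a protected loop (and the protected
edges of the one-vertex starter clique are just its loop), so a player may stay in place;
otherwise players move along the (unprotected) edges. -/
def adj19 (p q : ℕ) : V19 p q → V19 p q → Prop :=
  fun u v => u = v ∨ unprot19 p q u v

open PCR


namespace K1Aux

variable (p q : ℕ)

/-- helper mod lemma -/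
lemma mod_add_one (a n : ℕ) : (a % n + 1) % n = (a + 1) % n := by
  conv_rhs => rw [Nat.add_mod]
  rw [Nat.add_mod (a % n) 1, Nat.mod_mod_of_dvd _ dvd_rfl]

lemma pq_sub_one_mod (hp : 0 < p) (hq : 0 < q) : (p * q - 1) % q = q - 1 := by
  obtain ⟨p', rfl⟩ := Nat.exists_eq_add_of_le hp
  have h1 : (1 + p') * q = q + p' * q := by ring
  have h2 : (1 + p') * q - 1 = (q - 1) + p' * q := by omega
  rw [h2, Nat.add_mul_mod_self_right, Nat.mod_eq_of_lt (by omega)]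

def fq (hq : 0 < q) (n : ℕ) : Fin q := ⟨n % q, Nat.mod_lt _ hq⟩
def fp (hp : 0 < p) (n : ℕ) : Fin p := ⟨n % p, Nat.mod_lt _ hp⟩

variable (hp : 0 < p) (hq : 0 < q)

/-- the chase move of the cop -/
def chase : V19 p q → V19 p q
  | .omega => .c (fq q hq 0)
  | .c i => .c' (fq q hq ((i : ℕ) + 1))
  | .c' i => .c (fq q hq ((i : ℕ) + 1))
  | x => x

instance instDecUnprot : ∀ u v, Decidable (unprot19 p q u v) := fun u v => by
  cases u <;> cases v <;> simp only [unprot19] <;> infer_instance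

noncomputable def copS : CopStrat (V19 p q) 1 where
  init := fun _ => .omega
  move := fun c r _ => if unprot19 p q (c 0) r then r else chase p q hq (c 0)

lemma copS_valid : (copS p q hq).Valid (adj19 p q) := by
  intro c r i
  show adj19 p q (c i) (if unprot19 p q (c 0) r then r else chase p q hq (c 0))
  have : c i = c 0 := by congr 1; exact Subsingleton.elim _ _
  rw [this]
  split
  · exact Or.inr (by assumption)
  · cases h : c 0 with
    | omega => exact Or.inr trivial
    | c i => exact Or.inr rfl
    | c' i => exact Or.inr rfl
    | start => exact Or.inl rfl
    | r i => exact Or.inl rfl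
    | r' i => exact Or.inl rfl
    | s => exact Or.inl rfl
    | psi => exact Or.inl rfl

def copPos (t : ℕ) : V19 p q :=
  if t % 2 = 1 then .c (fq q hq (t - 1)) else .c' (fq q hq (t - 1))

def robPos (t : ℕ) : V19 p q :=
  if t % 2 = 1 then .r' (fp p hp (t - 1)) else .r (fp p hp (t - 1))

end K1Aux

namespace K1Aux

variable {p q : ℕ}

lemma copS_move_pos (hq : 0 < q) (c : Fin 1 → V19 p q) (r : V19 p q) (i : Fin 1)
    (h : unprot19 p q (c 0) r) : (copS p q hq).move c r i = r := if_pos h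

lemma copS_move_neg (hq : 0 < q) (c : Fin 1 → V19 p q) (r : V19 p q) (i : Fin 1)
    (h : ¬ unprot19 p q (c 0) r) : (copS p q hq).move c r i = chase p q hq (c 0) := if_neg h

lemma copS_caught (hq : 0 < q) (rs : RobStrat (V19 p q) 1) (t : ℕ)
    (hU : unprot19 p q ((play (copS p q hq) rs t).1 0) ((play (copS p q hq) rs t).2)) :
    caughtAt (unprot19 p q) (copS p q hq) rs (t + 1) := by
  refine ⟨0, ?_, ?_⟩ <;> rw [copS_move_pos hq _ _ _ hU]
  exact hU

lemma play_succ_fst (hq : 0 < q) (rs : RobStrat (V19 p q) 1) (t : ℕ) (i : Fin 1) :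
    (play (copS p q hq) rs (t + 1)).1 i =
      (copS p q hq).move (play (copS p q hq) rs t).1 (play (copS p q hq) rs t).2 i := rfl

lemma play_succ_snd (hq : 0 < q) (rs : RobStrat (V19 p q) 1) (t : ℕ) :
    (play (copS p q hq) rs (t + 1)).2 =
      rs.move ((copS p q hq).move (play (copS p q hq) rs t).1 (play (copS p q hq) rs t).2)
        (play (copS p q hq) rs t).2 := rfl

lemma unprot_omega (v : V19 p q) (hv : v ≠ .start) : unprot19 p q .omega v := by
  cases v <;> first | trivial | exact absurd rfl hv

lemma adj_start_cases (hp : 0 < p) (x : V19 p q) (h : adj19 p q .start x) :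
    x = .start ∨ x = .r (fp p hp 0) ∨ x = .r' (fp p hp 0) := by
  rcases h with h | h
  · exact Or.inl h.symm
  · cases x with
    | r j =>
        refine Or.inr (Or.inl ?_)
        congr 1
        refine Fin.ext ?_
        show (j : ℕ) = 0 % p
        rw [Nat.zero_mod]; exact h
    | r' j =>
        refine Or.inr (Or.inr ?_)
        congr 1
        refine Fin.ext ?_
        show (j : ℕ) = 0 % p
        rw [Nat.zero_mod]; exact h
    | _ => exact absurd h (by exact fun h => h)

lemma adj_r'_cases (hp : 0 < p) (j : Fin p) (x : V19 p q) (h : adj19 p q (.r' j) x) :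
    x = .r' j ∨ x = .r (fp p hp ((j : ℕ) + 1)) ∨ x = .r' (fp p hp ((j : ℕ) + 1)) ∨ x = .s := by
  rcases h with h | h
  · exact Or.inl h.symm
  · cases x with
    | r k => exact Or.inr (Or.inl (by congr 1; exact Fin.ext h))
    | r' k => exact Or.inr (Or.inr (Or.inl (by congr 1; exact Fin.ext h)))
    | s => exact Or.inr (Or.inr (Or.inr rfl))
    | _ => exact absurd h (by exact fun h => h)

lemma adj_r_cases (hp : 0 < p) (j : Fin p) (x : V19 p q) (h : adj19 p q (.r j) x) :
    x = .r j ∨ x = .r (fp p hp ((j : ℕ) + 1)) ∨ x = .r' (fp p hp ((j : ℕ) + 1)) ∨ x = .s := by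
  rcases h with h | h
  · exact Or.inl h.symm
  · cases x with
    | r k => exact Or.inr (Or.inl (by congr 1; exact Fin.ext h))
    | r' k => exact Or.inr (Or.inr (Or.inl (by congr 1; exact Fin.ext h)))
    | s => exact Or.inr (Or.inr (Or.inr rfl))
    | _ => exact absurd h (by exact fun h => h)

end K1Aux

namespace K1Aux

lemma main_inv {p q : ℕ} (hp : 0 < p) (hq : 0 < q)
    (rs : RobStrat (V19 p q) 1) (hrs : rs.Valid (adj19 p q)) :
    ∀ t, 1 ≤ t →
      (∃ s, s ≤ t + 1 ∧ caughtAt (unprot19 p q) (copS p q hq) rs s) ∨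
      ((play (copS p q hq) rs t).1 0 = copPos p q hq t ∧
       (play (copS p q hq) rs t).2 = robPos p q hp t) := by
  intro t ht
  induction t, ht using Nat.le_induction with
  | base =>
      -- round 1
      set v := (play (copS p q hq) rs 0).2 with hv
      by_cases hstart : v = V19.start
      · -- cop moves to c 0, robber forced
        have hc0 : (play (copS p q hq) rs 0).1 0 = V19.omega := rfl
        have hnu : ¬ unprot19 p q ((play (copS p q hq) rs 0).1 0) v := by
          rw [hc0, hstart]; exact fun h => h
        have hm : ∀ i, (copS p q hq).move (play (copS p q hq) rs 0).1 (play (copS p q hq) rs 0).2 i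
            = V19.c (fq q hq 0) := by
          intro i; rw [← hv, copS_move_neg hq _ _ _ hnu, hc0]; rfl
        have hp1 : (play (copS p q hq) rs 1).1 0 = V19.c (fq q hq 0) := by
          rw [play_succ_fst, hm]
        have hx : adj19 p q V19.start ((play (copS p q hq) rs 1).2) := by
          rw [play_succ_snd, ← hstart, ← hv]
          exact hrs _ _
        rcases adj_start_cases hp _ hx with h2 | h2 | h2
        · -- robber stays at start : caught at round 2
          refine Or.inl ⟨2, by omega, copS_caught hq rs 1 ?_⟩
          rw [hp1, h2]
          show (fq q hq 0 : ℕ) = 0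
          exact Nat.zero_mod q
        · -- robber to r 0 : caught at round 2
          refine Or.inl ⟨2, by omega, copS_caught hq rs 1 ?_⟩
          rw [hp1, h2]; trivial
        · -- robber to r' 0 : on track
          refine Or.inr ⟨?_, ?_⟩
          · rw [hp1]; rfl
          · rw [h2]; rfl
      · -- robber not at start: caught at round 1
        refine Or.inl ⟨1, by omega, copS_caught hq rs 0 ?_⟩
        exact unprot_omega _ hstart
  | succ t ht ih =>
      rcases ih with ⟨s, hs, hcs⟩ | ⟨hc1, hc2⟩
      · exact Or.inl ⟨s, by omega, hcs⟩
      by_cases hU : unprot19 p q (copPos p q hq t) (robPos p q hp t)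
      · refine Or.inl ⟨t + 1, by omega, copS_caught hq rs t ?_⟩
        rw [hc1, hc2]; exact hU
      -- chase move
      have hnu : ¬ unprot19 p q ((play (copS p q hq) rs t).1 0) ((play (copS p q hq) rs t).2) := by
        rw [hc1, hc2]; exact hU
      have hm : ∀ i, (copS p q hq).move (play (copS p q hq) rs t).1 (play (copS p q hq) rs t).2 i
          = chase p q hq (copPos p q hq t) := by
        intro i; rw [copS_move_neg hq _ _ _ hnu, hc1]
      have hfq : fq q hq ((fq q hq (t-1) : ℕ) + 1) = fq q hq t := by
        refine Fin.ext ?_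
        show ((t - 1) % q + 1) % q = t % q
        rw [mod_add_one]
        congr 1
        omega
      have hfp : ∀ j : Fin p, (j : ℕ) = (t - 1) % p →
          fp p hp ((j : ℕ) + 1) = fp p hp t := by
        intro j hj
        refine Fin.ext ?_
        show ((j : ℕ) + 1) % p = t % p
        rw [hj, mod_add_one]
        congr 1
        omega
      rcases Nat.mod_two_eq_zero_or_one t with ht2 | ht2
      · -- t even : cop at c' (t-1), robber at r (t-1); cop -> c t, robber must -> r' t
        have hcop : copPos p q hq t = V19.c' (fq q hq (t - 1)) := by
          unfold copPos; rw [if_neg (by omega)]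
        have hrob : robPos p q hp t = V19.r (fp p hp (t - 1)) := by
          unfold robPos; rw [if_neg (by omega)]
        have hchase : chase p q hq (copPos p q hq t) = V19.c (fq q hq t) := by
          rw [hcop]; show V19.c (fq q hq _) = _; rw [hfq]
        have hcop1 : copPos p q hq (t + 1) = V19.c (fq q hq t) := by
          unfold copPos; rw [if_pos (by omega)]; rfl
        have hp1 : (play (copS p q hq) rs (t+1)).1 0 = V19.c (fq q hq t) := by
          rw [play_succ_fst, hm, hchase]
        have hx : adj19 p q (V19.r (fp p hp (t - 1))) ((play (copS p q hq) rs (t+1)).2) := by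
          rw [play_succ_snd, ← hrob, ← hc2]
          exact hrs _ _
        have hnext : fp p hp ((fp p hp (t-1) : ℕ) + 1) = fp p hp t := hfp _ rfl
        rcases adj_r_cases hp _ _ hx with h2 | h2 | h2 | h2
        · refine Or.inl ⟨t + 2, by omega, copS_caught hq rs (t+1) ?_⟩
          rw [hp1, h2]; trivial
        · refine Or.inl ⟨t + 2, by omega, copS_caught hq rs (t+1) ?_⟩
          rw [hp1, h2]; trivial
        · refine Or.inr ⟨by rw [hp1, hcop1], ?_⟩
          rw [h2, hnext]
          show _ = robPos p q hp (t+1)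
          unfold robPos; rw [if_pos (by omega)]; rfl
        · refine Or.inl ⟨t + 2, by omega, copS_caught hq rs (t+1) ?_⟩
          rw [hp1, h2]; trivial
      · -- t odd : cop at c (t-1), robber at r' (t-1); cop -> c' t, robber must -> r t
        have hcop : copPos p q hq t = V19.c (fq q hq (t - 1)) := by
          unfold copPos; rw [if_pos ht2]
        have hrob : robPos p q hp t = V19.r' (fp p hp (t - 1)) := by
          unfold robPos; rw [if_pos ht2]
        have hchase : chase p q hq (copPos p q hq t) = V19.c' (fq q hq t) := by
          rw [hcop]; show V19.c' (fq q hq _) = _; rw [hfq]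
        have hcop1 : copPos p q hq (t + 1) = V19.c' (fq q hq t) := by
          unfold copPos; rw [if_neg (by omega)]; rfl
        have hp1 : (play (copS p q hq) rs (t+1)).1 0 = V19.c' (fq q hq t) := by
          rw [play_succ_fst, hm, hchase]
        have hx : adj19 p q (V19.r' (fp p hp (t - 1))) ((play (copS p q hq) rs (t+1)).2) := by
          rw [play_succ_snd, ← hrob, ← hc2]
          exact hrs _ _
        have hnext : fp p hp ((fp p hp (t-1) : ℕ) + 1) = fp p hp t := hfp _ rfl
        rcases adj_r'_cases hp _ _ hx with h2 | h2 | h2 | h2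
        · refine Or.inl ⟨t + 2, by omega, copS_caught hq rs (t+1) ?_⟩
          rw [hp1, h2]; trivial
        · refine Or.inr ⟨by rw [hp1, hcop1], ?_⟩
          rw [h2, hnext]
          show _ = robPos p q hp (t+1)
          unfold robPos; rw [if_neg (by omega)]; rfl
        · refine Or.inl ⟨t + 2, by omega, copS_caught hq rs (t+1) ?_⟩
          rw [hp1, h2]; trivial
        · refine Or.inl ⟨t + 2, by omega, copS_caught hq rs (t+1) ?_⟩
          rw [hp1, h2]; trivial

end K1Aux

namespace K1Aux

lemma terminal_unprot {p q : ℕ} (hp : 0 < p) (hq : 0 < q) :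
    unprot19 p q (copPos p q hq (p * q)) (robPos p q hp (p * q)) := by
  have h1 : (fq q hq (p * q - 1) : ℕ) = q - 1 := pq_sub_one_mod p q hp hq
  have h2 : (fp p hp (p * q - 1) : ℕ) = p - 1 := by
    show (p * q - 1) % p = p - 1
    rw [mul_comm]
    exact pq_sub_one_mod q p hq hp
  unfold copPos robPos
  rcases Nat.mod_two_eq_zero_or_one (p * q) with h | h
  · rw [if_neg (by omega), if_neg (by omega)]
    exact ⟨h1, h2⟩
  · rw [if_pos h, if_pos h]
    exact ⟨h1, h2⟩

lemma cop_wins {p q : ℕ} (hp : 0 < p) (hq : 0 < q) (rs : RobStrat (V19 p q) 1)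
    (hrs : rs.Valid (adj19 p q)) :
    ∃ s, s ≤ p * q + 1 ∧ caughtAt (unprot19 p q) (copS p q hq) rs s := by
  have hpq1 : 1 ≤ p * q := Nat.one_le_iff_ne_zero.2 (by positivity)
  rcases main_inv hp hq rs hrs (p * q) hpq1 with ⟨s, hs, hcs⟩ | ⟨hc1, hc2⟩
  · exact ⟨s, hs, hcs⟩
  · refine ⟨p * q + 1, le_refl _, copS_caught hq rs (p * q) ?_⟩
    rw [hc1, hc2]
    exact terminal_unprot hp hq

end K1Aux


open K1Aux

/-- In the `k = 1` strongly-connected construction of Theorem 5.1 (with `p ≠ q` primes), the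
unique cop has a winning strategy starting at `ω`, forcing the robber along his track until
capture; hence the graph has cop number exactly `1`. -/
theorem k1_construction_cop_number_one (p q : ℕ) (hp : p.Prime) (hq : q.Prime)
    (hpq : p ≠ q) :
    (∃ (t : ℕ) (cs : CopStrat (V19 p q) 1), cs.init 0 = V19.omega ∧
      cs.Valid (adj19 p q) ∧
      ∀ rs : RobStrat (V19 p q) 1, rs.Valid (adj19 p q) →
        ∃ s, s ≤ t ∧ caughtAt (unprot19 p q) cs rs s) ∧
    copNumber (adj19 p q) (unprot19 p q) = 1 := by
  have hp0 : 0 < p := hp.pos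
  have hq0 : 0 < q := hq.pos
  have hwin : ∃ (t : ℕ) (cs : CopStrat (V19 p q) 1), cs.init 0 = V19.omega ∧
      cs.Valid (adj19 p q) ∧
      ∀ rs : RobStrat (V19 p q) 1, rs.Valid (adj19 p q) →
        ∃ s, s ≤ t ∧ caughtAt (unprot19 p q) cs rs s :=
    ⟨p * q + 1, copS p q hq0, rfl, copS_valid p q hq0, fun rs hrs => cop_wins hp0 hq0 rs hrs⟩
  refine ⟨hwin, ?_⟩
  have h1 : 1 ∈ {k | ∃ t, CopsWinIn (adj19 p q) (unprot19 p q) k t} := by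
    obtain ⟨t, cs, _, hv, hw⟩ := hwin
    exact ⟨t, cs, hv, hw⟩
  have h0 : 0 ∉ {k | ∃ t, CopsWinIn (adj19 p q) (unprot19 p q) k t} := by
    rintro ⟨t, cs, hv, hw⟩
    obtain ⟨s, _, hcs⟩ := hw ⟨fun _ => V19.omega, fun _ r => r⟩ (fun _ r => Or.inl rfl)
    cases s with
    | zero => exact hcs
    | succ n => obtain ⟨i, _⟩ := hcs; exact i.elim0
  refine le_antisymm (Nat.sInf_le h1) (Nat.one_le_iff_ne_zero.2 ?_)
  intro h
  exact h0 (h ▸ Nat.sInf_mem ⟨1, h1⟩)
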